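/- arXiv:1902.02201 — 9 statements merged into one kernel-verified Lean document; each statement's English description precedes it below -/
import Mathlib

section
/- Let H be a digraph with vertex ordering a_1 < a_2 < ... < a_p that is a min-ordering, i.e., if uv and u'v' are arcs with u < u' and v' < v, then uv' is an arc. Define E' to be the set of pairs (a_i, a_j) such that a_i a_j is not an arc of H, but there exists an arc a_i a_{j'} of H with j' < j and an arc a_{i'} a_j of H with i' < i. Then the ordering a_1, ..., a_p is a min-max-ordering of the digraph H' with arc set E ∪ E' (where E = A(H)): for any two arcs e = a_i a_{j'} and e' = a_{i'} a_j in E ∪ E' with i' < i and j' < j, both a_i a_j and a_{i'} a_{j'} belong to E ∪ E'. -/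
/-- If `a_1 < ... < a_p` is a min-ordering of digraph `H` (arc relation `A`),
and `E'` consists of the non-arcs `(i,j)` with an out-neighbor of `i` before `j` and an
in-neighbor of `j` before `i`, then the ordering is a min-max-ordering of `H' = (V, E ∪ E')`:
for arcs `i j'` and `i' j` of `E ∪ E'` with `i' < i` and `j' < j`, both `i j` and `i' j'`
belong to `E ∪ E'`. -/
theorem stmt_0 {V : Type*} [LinearOrder V] (A : V → V → Prop)
    (hmin : ∀ u u' v v', A u v → A u' v' → u < u' → v' < v → A u v')
    (E' : V → V → Prop)
    (hE' : ∀ i j, E' i j ↔ (¬ A i j ∧ (∃ j' < j, A i j') ∧ (∃ i' < i, A i' j)))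
    (i i' j j' : V) (hi : i' < i) (hj : j' < j)
    (he : A i j' ∨ E' i j') (he' : A i' j ∨ E' i' j) :
    (A i j ∨ E' i j) ∧ (A i' j' ∨ E' i' j') := by
  constructor
  · by_cases hA : A i j
    · exact Or.inl hA
    right
    rw [hE']
    refine ⟨hA, ?_, ?_⟩
    · rcases he with h | h
      · exact ⟨j', hj, h⟩
      · obtain ⟨-, ⟨j'', hj'', hAj''⟩, -⟩ := (hE' i j').mp h
        exact ⟨j'', hj''.trans hj, hAj''⟩
    · rcases he' with h | h
      · exact ⟨i', hi, h⟩
      · obtain ⟨-, -, ⟨i'', hi'', hAi''⟩⟩ := (hE' i' j).mp h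
        exact ⟨i'', hi''.trans hi, hAi''⟩
  · by_cases hA : A i' j'
    · exact Or.inl hA
    right
    rw [hE']
    refine ⟨hA, ?_⟩
    rcases he with h | h
    · rcases he' with h' | h'
      · exact absurd (hmin i' i j j' h' h hi hj) hA
      · obtain ⟨-, ⟨j₀, hj₀, hAj₀⟩, ⟨i₀, hi₀, hAi₀⟩⟩ := (hE' i' j).mp h'
        rcases lt_trichotomy j₀ j' with hlt | heq | hgt
        · exact ⟨⟨j₀, hlt, hAj₀⟩, ⟨i₀, hi₀, hmin i₀ i j j' hAi₀ h (hi₀.trans hi) hj⟩⟩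
        · exact absurd (heq ▸ hAj₀) hA
        · exact absurd (hmin i' i j₀ j' hAj₀ h hi hgt) hA
    · obtain ⟨hnA, ⟨j₀, hj₀, hAj₀⟩, ⟨i₀, hi₀, hAi₀⟩⟩ := (hE' i j').mp h
      rcases he' with h' | h'
      · refine ⟨⟨j₀, hj₀, hmin i' i j j₀ h' hAj₀ hi (hj₀.trans hj)⟩, ?_⟩
        rcases lt_trichotomy i₀ i' with hlt | heq | hgt
        · exact ⟨i₀, hlt, hAi₀⟩
        · exact absurd (heq ▸ hAi₀) hA
        · exact absurd (hmin i' i₀ j j' h' hAi₀ hgt hj) hA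
      · obtain ⟨hnA', ⟨j₁, hj₁, hAj₁⟩, ⟨i₁, hi₁, hAi₁⟩⟩ := (hE' i' j).mp h'
        rcases lt_trichotomy j₁ j' with hjlt | hjeq | hjgt
        · refine ⟨⟨j₁, hjlt, hAj₁⟩, ?_⟩
          rcases lt_trichotomy i₀ i' with hilt | hieq | higt
          · exact ⟨i₀, hilt, hAi₀⟩
          · exact absurd (hieq ▸ hAi₀) hA
          · exact ⟨i₁, hi₁, hmin i₁ i₀ j j' hAi₁ hAi₀ (hi₁.trans higt) hj⟩
        · exact absurd (hjeq ▸ hAj₁) hA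
        · rcases lt_trichotomy i₀ i' with hilt | hieq | higt
          · exact ⟨⟨j₀, hj₀, hmin i' i j₁ j₀ hAj₁ hAj₀ hi (hj₀.trans hjgt)⟩, ⟨i₀, hilt, hAi₀⟩⟩
          · exact absurd (hieq ▸ hAi₀) hA
          · exact absurd (hmin i' i₀ j₁ j' hAj₁ hAi₀ higt hjgt) hA
end

section
/- Let H be a digraph with a min-ordering a_1 < ... < a_p, and let E' be the set of pairs (a_i, a_j) such that a_i a_j ∉ A(H), but there exist j' < j with a_i a_{j'} ∈ A(H) and i' < i with a_{i'} a_j ∈ A(H). Then for every pair (a_i, a_j) ∈ E', either a_i has no out-neighbor strictly after a_j in the ordering, or a_j has no in-neighbor strictly after a_i in the ordering. -/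
/-- For a digraph `H` with a min-ordering, every pair `(i,j) ∈ E'` (a non-arc
with an earlier out-neighbor of `i` and an earlier in-neighbor of `j`) satisfies: either
`i` has no out-neighbor strictly after `j`, or `j` has no in-neighbor strictly after `i`. -/
theorem stmt_1 {V : Type*} [LinearOrder V] (A : V → V → Prop)
    (hmin : ∀ u u' v v', A u v → A u' v' → u < u' → v' < v → A u v')
    (E' : V → V → Prop)
    (hE' : ∀ i j, E' i j ↔ (¬ A i j ∧ (∃ j' < j, A i j') ∧ (∃ i' < i, A i' j))) :
    ∀ i j, E' i j → (∀ t, A i t → ¬ j < t) ∨ (∀ t, A t j → ¬ i < t) := by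
  intro i j hij
  by_contra! h
  obtain ⟨⟨t, hit, hjt⟩, s, hsj, his⟩ := h
  exact ((hE' i j).mp hij).1 (hmin i s t j hit hsj his hjt)
end

section
/- Let H be a digraph admitting a min-ordering a_1 < ... < a_p, let D be a digraph, and suppose lists L(x) ⊆ V(H) for x ∈ V(D) are arc-consistent (for every arc xy of D and every a ∈ L(x) there exists b ∈ L(y) with ab ∈ A(H), and for every b ∈ L(y) there exists a ∈ L(x) with ab ∈ A(H)) and all lists are nonempty. Then the map f sending each vertex x of D to the minimum element of L(x) in the min-ordering is a homomorphism from D to H. -/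
/-! Let `a` and `b` be the minima of `L x` and `L y`. Arc-consistency provides arcs `a b'` and
`a' b` with `a ≤ a'` and `b ≤ b'`; unless one of these arcs is already `a b`, the min-ordering
property applied to them yields the arc `a b`. -/

def IsMinOrdering {V : Type*} [LinearOrder V] (A : V → V → Prop) : Prop :=
  ∀ u u' v v', A u v → A u' v' → u < u' → v' < v → A u v'

namespace IsMinOrdering

variable {V : Type*} [LinearOrder V] {A : V → V → Prop}

theorem rel_of_le_of_le (hA : IsMinOrdering A) {a a' b b' : V} (hab' : A a b') (ha'b : A a' b)
    (ha : a ≤ a') (hb : b ≤ b') : A a b := by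
  rcases ha.eq_or_lt with rfl | ha
  · exact ha'b
  rcases hb.eq_or_lt with rfl | hb
  · exact hab'
  exact hA a a' b' b hab' ha'b ha hb

theorem rel_min'_min' (hA : IsMinOrdering A) {s t : Finset V} (hs : s.Nonempty) (ht : t.Nonempty)
    (hst : ∀ a ∈ s, ∃ b ∈ t, A a b) (hts : ∀ b ∈ t, ∃ a ∈ s, A a b) :
    A (s.min' hs) (t.min' ht) := by
  obtain ⟨b', hb', hab'⟩ := hst _ (s.min'_mem hs)
  obtain ⟨a', ha', ha'b⟩ := hts _ (t.min'_mem ht)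
  exact hA.rel_of_le_of_le hab' ha'b (s.min'_le a' ha') (t.min'_le b' hb')

end IsMinOrdering

/-- If `H` admits a min-ordering, `D` is a digraph with nonempty
arc-consistent lists `L(x) ⊆ V(H)`, then mapping each vertex of `D` to the minimum
element of its list is a homomorphism from `D` to `H`. -/
theorem stmt_2 {V U : Type*} [LinearOrder V] (A : V → V → Prop)
    (hmin : ∀ u u' v v', A u v → A u' v' → u < u' → v' < v → A u v')
    (AD : U → U → Prop) (L : U → Finset V) (hne : ∀ x, (L x).Nonempty)
    (hac1 : ∀ x y, AD x y → ∀ a ∈ L x, ∃ b ∈ L y, A a b)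
    (hac2 : ∀ x y, AD x y → ∀ b ∈ L y, ∃ a ∈ L x, A a b) :
    ∀ x y, AD x y → A ((L x).min' (hne x)) ((L y).min' (hne y)) := fun x y hxy =>
  IsMinOrdering.rel_min'_min' hmin (hne x) (hne y) (hac1 x y hxy) (hac2 x y hxy)
end

section
/- Let H be a digraph whose vertex set is partitioned into V_0, V_1, ..., V_{k-1} such that every arc of H goes from some V_i to V_{i+1} (indices modulo k), and suppose a linear order < on V(H) restricts to a min-ordering on the subgraph induced by each pair of circularly consecutive parts V_i ∪ V_{i+1}. Define a binary operation f on V(H) by: f(x,y) = min(x,y) when x,y belong to the same part V_i, and f(x,y) = x when x and y belong to distinct parts. Then f is a polymorphism of H that is a semi-lattice (commutative, associative, idempotent) when restricted to pairs from the same part. -/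
/-!
On a single part, `f` is `min`, so it is a semilattice there, and an arc pair `x₁y₁, x₂y₂` with
`x₁, x₂` in one part is sent to `min x₁ x₂ → min y₁ y₂`, which is an arc exactly by the
min-ordering property. Arcs raise the part index by one, so `x₁, x₂` lie in the same part iff
`y₁, y₂` do; when they do not, `f` projects both pairs to the first arc.
-/

section

variable {V ι : Type*}

theorem part_eq_iff_of_arc [Add ι] [One ι] [IsRightCancelAdd ι] {A : V → V → Prop}
    {π : V → ι} (harc : ∀ x y, A x y → π y = π x + 1) {x₁ x₂ y₁ y₂ : V}
    (h₁ : A x₁ y₁) (h₂ : A x₂ y₂) : π y₁ = π y₂ ↔ π x₁ = π x₂ := by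
  rw [harc _ _ h₁, harc _ _ h₂, add_left_inj]

variable [LinearOrder V]

theorem arc_min_min_of_minOrdering {A : V → V → Prop} {π : V → ι}
    (hmin : ∀ u u' v v', A u v → A u' v' → π u = π u' → u < u' → v' < v → A u v')
    {x₁ x₂ y₁ y₂ : V} (h₁ : A x₁ y₁) (h₂ : A x₂ y₂) (hx : π x₁ = π x₂) :
    A (min x₁ x₂) (min y₁ y₂) := by
  wlog hle : x₁ ≤ x₂ generalizing x₁ x₂ y₁ y₂
  · rw [min_comm x₁, min_comm y₁]
    exact this h₂ h₁ hx.symm (le_of_not_ge hle)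
  rw [min_eq_left hle]
  rcases le_or_gt y₁ y₂ with hy | hy
  · rwa [min_eq_left hy]
  rw [min_eq_right hy.le]
  rcases hle.eq_or_lt with rfl | hlt
  · exact h₂
  · exact hmin x₁ x₂ y₁ y₂ h₁ h₂ hx hlt hy

theorem part_min_of_part_eq {π : V → ι} {x y : V} (h : π x = π y) : π (min x y) = π x := by
  rcases min_choice x y with hm | hm <;> rw [hm]
  exact h.symm

variable [DecidableEq ι] (π : V → ι)

def partMin (x y : V) : V :=
  if π x = π y then min x y else x

variable {π}

theorem partMin_of_part_eq {x y : V} (h : π x = π y) : partMin π x y = min x y :=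
  if_pos h

theorem partMin_of_part_ne {x y : V} (h : π x ≠ π y) : partMin π x y = x :=
  if_neg h

theorem partMin_self (x : V) : partMin π x x = x :=
  (partMin_of_part_eq rfl).trans (min_self x)

theorem partMin_comm {x y : V} (h : π x = π y) : partMin π x y = partMin π y x := by
  rw [partMin_of_part_eq h, partMin_of_part_eq h.symm, min_comm]

theorem partMin_assoc {x y z : V} (hxy : π x = π y) (hyz : π y = π z) :
    partMin π (partMin π x y) z = partMin π x (partMin π y z) := by
  have hxy_z : π (min x y) = π z := (part_min_of_part_eq hxy).trans (hxy.trans hyz)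
  have hx_yz : π x = π (min y z) := hxy.trans (part_min_of_part_eq hyz).symm
  rw [partMin_of_part_eq hxy, partMin_of_part_eq hyz, partMin_of_part_eq hxy_z,
    partMin_of_part_eq hx_yz, min_assoc]

theorem partMin_arc [Add ι] [One ι] [IsRightCancelAdd ι] {A : V → V → Prop}
    (harc : ∀ x y, A x y → π y = π x + 1)
    (hmin : ∀ u u' v v', A u v → A u' v' → π u = π u' → u < u' → v' < v → A u v')
    {x₁ x₂ y₁ y₂ : V} (h₁ : A x₁ y₁) (h₂ : A x₂ y₂) :
    A (partMin π x₁ x₂) (partMin π y₁ y₂) := by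
  by_cases hx : π x₁ = π x₂
  · have hy : π y₁ = π y₂ := (part_eq_iff_of_arc harc h₁ h₂).mpr hx
    rw [partMin_of_part_eq hx, partMin_of_part_eq hy]
    exact arc_min_min_of_minOrdering hmin h₁ h₂ hx
  · have hy : π y₁ ≠ π y₂ := mt (part_eq_iff_of_arc harc h₁ h₂).mp hx
    rwa [partMin_of_part_ne hx, partMin_of_part_ne hy]

end

theorem stmt_4_general {k : ℕ} {V : Type*} [LinearOrder V]
    (A : V → V → Prop) (π : V → ZMod k)
    (harc : ∀ x y, A x y → π y = π x + 1)
    (hmin : ∀ u u' v v', A u v → A u' v' → π u = π u' → u < u' → v' < v → A u v') :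
    let f : V → V → V := fun x y => if π x = π y then min x y else x
    (∀ x1 x2 y1 y2, A x1 y1 → A x2 y2 → A (f x1 x2) (f y1 y2)) ∧
    (∀ x y, π x = π y → f x y = f y x) ∧
    (∀ x y z, π x = π y → π y = π z → f (f x y) z = f x (f y z)) ∧
    (∀ x, f x x = x) :=
  ⟨fun _ _ _ _ h₁ h₂ => partMin_arc harc hmin h₁ h₂,
    fun _ _ h => partMin_comm h,
    fun _ _ _ hxy hyz => partMin_assoc hxy hyz,
    partMin_self⟩

/-- Let `H` be a digraph whose vertices are partitioned into parts
`V_i = π⁻¹(i)` (via a homomorphism `π` to the directed `k`-cycle, so every arc goes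
from `V_i` to `V_{i+1}`), with a linear order that is a min-ordering on each pair of
circularly consecutive parts. Then `f(x,y) = min(x,y)` for `x,y` in the same part and
`f(x,y) = x` otherwise is a polymorphism of `H`, commutative, associative and idempotent
on pairs from the same part. -/
theorem stmt_4 {k : ℕ} (hk : 0 < k) {V : Type*} [LinearOrder V]
    (A : V → V → Prop) (π : V → ZMod k)
    (harc : ∀ x y, A x y → π y = π x + 1)
    (hmin : ∀ u u' v v', A u v → A u' v' → π u = π u' → u < u' → v' < v → A u v') :
    let f : V → V → V := fun x y => if π x = π y then min x y else x
    (∀ x1 x2 y1 y2, A x1 y1 → A x2 y2 → A (f x1 x2) (f y1 y2)) ∧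
    (∀ x y, π x = π y → f x y = f y x) ∧
    (∀ x y z, π x = π y → π y = π z → f (f x y) z = f x (f y z)) ∧
    (∀ x, f x x = x) :=
  stmt_4_general A π harc hmin
end

section
/- Let H be a digraph whose vertex set is partitioned into parts V_0, ..., V_{k-1} with all arcs going from V_i to V_{i+1} (mod k), equipped with a linear order < that is a min-ordering on each consecutive pair of parts. Define a ternary operation g on V(H) by: if x,y,z are all in the same part, g(x,y,z) = x; if exactly two of the three arguments lie in a common part V_i, g(x,y,z) is the minimum (under <) of those two; if x,y,z lie in three distinct parts, g(x,y,z) = x. Then g is a conservative polymorphism of H satisfying g(x,x,y) = g(x,y,x) = g(y,x,x) = x whenever x and y lie in distinct parts. -/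
private lemma minArc {V : Type*} [LinearOrder V] {A : V → V → Prop} {u u' v v' : V}
    (hminL : u < u' → v' < v → A u v') (hminR : u' < u → v < v' → A u' v)
    (h1 : A u v) (h2 : A u' v') : A (min u u') (min v v') := by
  rcases lt_trichotomy u u' with h | h | h
  · rw [min_eq_left h.le]
    rcases le_or_gt v v' with hv | hv
    · rwa [min_eq_left hv]
    · rw [min_eq_right hv.le]; exact hminL h hv
  · subst h
    rcases le_total v v' with hv | hv
    · rwa [min_self, min_eq_left hv]
    · rwa [min_self, min_eq_right hv]
  · rw [min_eq_right h.le]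
    rcases le_or_gt v' v with hv | hv
    · rwa [min_eq_right hv]
    · rw [min_eq_left hv.le]; exact hminR h hv

/-- With `H` partitioned into parts `V_i = π⁻¹(i)` (all arcs from `V_i` to
`V_{i+1}` mod `k`) and a linear order that is a min-ordering on each consecutive pair of
parts, the ternary operation `g` defined by: `g(x,y,z) = x` if all three lie in the same
part or in three distinct parts, and `g` returns the minimum of the two arguments lying
in a common part otherwise, is a conservative polymorphism of `H` satisfying
`g(x,x,y) = g(x,y,x) = g(y,x,x) = x` whenever `x` and `y` lie in distinct parts. -/
theorem stmt_5 {k : ℕ} (hk : 0 < k) {V : Type*} [LinearOrder V]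
    (A : V → V → Prop) (π : V → ZMod k)
    (harc : ∀ x y, A x y → π y = π x + 1)
    (hmin : ∀ u u' v v', A u v → A u' v' → π u = π u' → u < u' → v' < v → A u v') :
    let g : V → V → V → V := fun x y z =>
      if π x = π y ∧ π y = π z then x
      else if π x = π y then min x y
      else if π x = π z then min x z
      else if π y = π z then min y z
      else x
    (∀ x1 x2 x3 y1 y2 y3, A x1 y1 → A x2 y2 → A x3 y3 →
        A (g x1 x2 x3) (g y1 y2 y3)) ∧
    (∀ x y z, g x y z = x ∨ g x y z = y ∨ g x y z = z) ∧
    (∀ x y, π x ≠ π y → g x x y = x ∧ g x y x = x ∧ g y x x = x) := by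
  intro g
  have gdef : ∀ x y z, g x y z =
      if π x = π y ∧ π y = π z then x
      else if π x = π y then min x y
      else if π x = π z then min x z
      else if π y = π z then min y z
      else x := fun _ _ _ => rfl
  refine ⟨?_, ?_, ?_⟩
  · intro x1 x2 x3 y1 y2 y3 h1 h2 h3
    have e1 := harc _ _ h1
    have e2 := harc _ _ h2
    have e3 := harc _ _ h3
    have p12 : (π y1 = π y2) ↔ (π x1 = π x2) := by rw [e1, e2, add_left_inj]
    have p23 : (π y2 = π y3) ↔ (π x2 = π x3) := by rw [e2, e3, add_left_inj]
    have p13 : (π y1 = π y3) ↔ (π x1 = π x3) := by rw [e1, e3, add_left_inj]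
    by_cases h12 : π x1 = π x2 <;> by_cases h23 : π x2 = π x3
    · rw [gdef, gdef, if_pos ⟨h12, h23⟩, if_pos ⟨p12.mpr h12, p23.mpr h23⟩]
      exact h1
    · rw [gdef, gdef, if_neg (fun h => h23 h.2), if_pos h12,
        if_neg (fun h => h23 (p23.mp h.2)), if_pos (p12.mpr h12)]
      exact minArc (hmin x1 x2 y1 y2 h1 h2 h12) (hmin x2 x1 y2 y1 h2 h1 h12.symm) h1 h2
    · have h13 : ¬ π x1 = π x3 := fun h => h12 (h.trans h23.symm)
      rw [gdef, gdef, if_neg (fun h => h12 h.1), if_neg h12, if_neg h13, if_pos h23,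
        if_neg (fun h => h12 (p12.mp h.1)), if_neg (fun h => h12 (p12.mp h)),
        if_neg (fun h => h13 (p13.mp h)), if_pos (p23.mpr h23)]
      exact minArc (hmin x2 x3 y2 y3 h2 h3 h23) (hmin x3 x2 y3 y2 h3 h2 h23.symm) h2 h3
    · by_cases h13 : π x1 = π x3
      · rw [gdef, gdef, if_neg (fun h => h12 h.1), if_neg h12, if_pos h13,
          if_neg (fun h => h12 (p12.mp h.1)), if_neg (fun h => h12 (p12.mp h)),
          if_pos (p13.mpr h13)]
        exact minArc (hmin x1 x3 y1 y3 h1 h3 h13) (hmin x3 x1 y3 y1 h3 h1 h13.symm) h1 h3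
      · rw [gdef, gdef, if_neg (fun h => h12 h.1), if_neg h12, if_neg h13, if_neg h23,
          if_neg (fun h => h12 (p12.mp h.1)), if_neg (fun h => h12 (p12.mp h)),
          if_neg (fun h => h13 (p13.mp h)), if_neg (fun h => h23 (p23.mp h))]
        exact h1
  · intro x y z
    rw [gdef]
    split_ifs
    · tauto
    · rcases min_choice x y with h | h <;> rw [h] <;> tauto
    · rcases min_choice x z with h | h <;> rw [h] <;> tauto
    · rcases min_choice y z with h | h <;> rw [h] <;> tauto
    · tauto
  · intro x y hxy
    refine ⟨?_, ?_, ?_⟩ <;> rw [gdef]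
    · rw [if_neg (fun h => hxy h.2), if_pos rfl, min_self]
    · rw [if_neg (fun h => hxy h.1), if_neg hxy, if_pos rfl, min_self]
    · rw [if_neg (fun h => hxy h.1.symm), if_neg (fun h => hxy h.symm),
        if_neg (fun h => hxy h.symm), if_pos rfl, min_self]
end

section
/- Let H be a digraph admitting a k-min-ordering for some k > 1: its vertices are partitioned into V_0,...,V_{k-1} with all arcs going from V_i to V_{i+1} (mod k), and a linear order < is a min-ordering on each consecutive pair of parts. Let D be a weakly connected digraph with arc-consistent nonempty lists L(x) ⊆ V(H), and suppose D admits a homomorphism to the directed k-cycle with parts D_0,...,D_{k-1} such that for some fixed shift ℓ, L(x) ∩ V_{j+ℓ} ≠ ∅ for every x ∈ D_j. Then the map f sending each x ∈ D_j to the minimum element (under <) of L(x) ∩ V_{j+ℓ} is a list homomorphism from D to H. -/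
/-!
For an arc `xy` of `D`, arc-consistency gives `b ∈ L(y)` with `f(x) → b` and `a ∈ L(x)` with
`a → f(y)`. Since the parts advance by one along arcs of both `H` and `D`, `a` lies in the part
chosen for `x` and `b` in the part chosen for `y`, so `f(x) ≤ a` and `f(y) ≤ b` by minimality.
The min-ordering property applied to the arcs `f(x) b` and `a f(y)` then gives `f(x) → f(y)`.
-/

section MinOrdering

variable {V U G : Type*} [LinearOrder V] {A : V → V → Prop} {πH : V → G}

theorem arc_of_le_of_le
    (hmin : ∀ u u' v v', A u v → A u' v' → πH u = πH u' → u < u' → v' < v → A u v')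
    {u u' v v' : V} (huv : A u v) (hu'v' : A u' v') (hπ : πH u = πH u')
    (hu : u ≤ u') (hv : v' ≤ v) : A u v' := by
  rcases hu.eq_or_lt with rfl | hu
  · exact hu'v'
  rcases hv.eq_or_lt with rfl | hv
  · exact huv
  exact hmin u u' v v' huv hu'v' hπ hu hv

theorem arc_of_isLeast_inter_part [AddCommGroupWithOne G]
    (hmin : ∀ u u' v v', A u v → A u' v' → πH u = πH u' → u < u' → v' < v → A u v')
    (harcH : ∀ a b, A a b → πH b = πH a + 1)
    {AD : U → U → Prop} {πD : U → G} (harcD : ∀ x y, AD x y → πD y = πD x + 1)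
    {L : U → Set V}
    (hac1 : ∀ x y, AD x y → ∀ a ∈ L x, ∃ b ∈ L y, A a b)
    (hac2 : ∀ x y, AD x y → ∀ b ∈ L y, ∃ a ∈ L x, A a b)
    {ℓ : G} {f : U → V} (hf : ∀ x, IsLeast {a ∈ L x | πH a = πD x + ℓ} (f x))
    {x y : U} (hxy : AD x y) : A (f x) (f y) := by
  obtain ⟨⟨hfxL, hfxπ⟩, hfx_le⟩ := hf x
  obtain ⟨⟨hfyL, hfyπ⟩, hfy_le⟩ := hf y
  obtain ⟨b, hbL, hfxb⟩ := hac1 x y hxy (f x) hfxL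
  obtain ⟨a, haL, hafy⟩ := hac2 x y hxy (f y) hfyL
  have hbπ : πH b = πD y + ℓ := by
    rw [harcH _ _ hfxb, hfxπ, harcD x y hxy]
    abel
  have haπ : πH a = πD x + ℓ := by
    have h := harcH _ _ hafy
    rw [hfyπ, harcD x y hxy] at h
    exact add_right_cancel (a := πH a) (b := 1) (by rw [← h]; abel)
  exact arc_of_le_of_le hmin hfxb hafy (by rw [hfxπ, haπ])
    (hfx_le ⟨haL, haπ⟩) (hfy_le ⟨hbL, hbπ⟩)

end MinOrdering

theorem stmt_6_general {k : ℕ} {V U : Type*} [LinearOrder V]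
    (A : V → V → Prop) (πH : V → ZMod k)
    (harcH : ∀ a b, A a b → πH b = πH a + 1)
    (hmin : ∀ u u' v v', A u v → A u' v' → πH u = πH u' → u < u' → v' < v → A u v')
    (AD : U → U → Prop)
    (πD : U → ZMod k) (harcD : ∀ x y, AD x y → πD y = πD x + 1)
    (L : U → Finset V)
    (hac1 : ∀ x y, AD x y → ∀ a ∈ L x, ∃ b ∈ L y, A a b)
    (hac2 : ∀ x y, AD x y → ∀ b ∈ L y, ∃ a ∈ L x, A a b)
    (ℓ : ZMod k)
    (hne : ∀ x, ((L x).filter (fun a => πH a = πD x + ℓ)).Nonempty) :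
    let f : U → V := fun x => ((L x).filter (fun a => πH a = πD x + ℓ)).min' (hne x)
    (∀ x, f x ∈ L x) ∧ (∀ x y, AD x y → A (f x) (f y)) := by
  intro f
  have hf : ∀ x, IsLeast {a ∈ (L x : Set V) | πH a = πD x + ℓ} (f x) := fun x => by
    simpa only [Finset.coe_filter, Finset.mem_coe] using Finset.isLeast_min' _ (hne x)
  exact ⟨fun x => (hf x).1.1, fun x y => arc_of_isLeast_inter_part hmin harcH harcD
    (L := fun x => (L x : Set V)) hac1 hac2 hf⟩

/-- Let `H` admit a `k`-min-ordering (`k > 1`), i.e. a homomorphism `πH` to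
the directed `k`-cycle and a linear order that is a min-ordering on each consecutive pair
of parts. Let `D` be weakly connected with arc-consistent lists and a homomorphism `πD`
to the `k`-cycle, and suppose for a fixed shift `ℓ` each list meets the part
`V_{πD(x)+ℓ}`. Then sending each `x` to the minimum element of `L(x) ∩ V_{πD(x)+ℓ}` is a
list homomorphism from `D` to `H`. -/
theorem stmt_6 {k : ℕ} (hk : 1 < k) {V U : Type*} [LinearOrder V]
    (A : V → V → Prop) (πH : V → ZMod k)
    (harcH : ∀ a b, A a b → πH b = πH a + 1)
    (hmin : ∀ u u' v v', A u v → A u' v' → πH u = πH u' → u < u' → v' < v → A u v')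
    (AD : U → U → Prop)
    (hconn : ∀ x y : U, Relation.ReflTransGen (fun a b => AD a b ∨ AD b a) x y)
    (πD : U → ZMod k) (harcD : ∀ x y, AD x y → πD y = πD x + 1)
    (L : U → Finset V)
    (hac1 : ∀ x y, AD x y → ∀ a ∈ L x, ∃ b ∈ L y, A a b)
    (hac2 : ∀ x y, AD x y → ∀ b ∈ L y, ∃ a ∈ L x, A a b)
    (hneL : ∀ x, (L x).Nonempty)
    (ℓ : ZMod k)
    (hne : ∀ x, ((L x).filter (fun a => πH a = πD x + ℓ)).Nonempty) :
    let f : U → V := fun x => ((L x).filter (fun a => πH a = πD x + ℓ)).min' (hne x)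
    (∀ x, f x ∈ L x) ∧ (∀ x y, AD x y → A (f x) (f y)) :=
  stmt_6_general A πH harcH hmin AD πD harcD L hac1 hac2 ℓ hne
end

section
/- Let H be a digraph and let Ĥ² be the digraph whose vertices are ordered pairs of vertices of H and whose arcs are (a_1,a_2)(b_1,b_2) whenever a_1 b_1, a_2 b_2 ∈ A(H) and a_1 b_2 ∉ A(H) (or symmetrically b_1 a_1, b_2 a_2 ∈ A(H) and b_2 a_1 ∉ A(H)). If there exists an arc from (a_1,a_2) to (b_1,b_2) in Ĥ² via forward arcs (a_1 b_1, a_2 b_2 ∈ A(H), a_1 b_2 ∉ A(H)) and < is a min-ordering of H with a_1 < a_2, then b_1 < b_2. -/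
/-- If there is a forward arc in `Ĥ²` from `(a₁,a₂)` to `(b₁,b₂)`
(i.e. `a₁b₁, a₂b₂ ∈ A(H)` and `a₁b₂ ∉ A(H)`) and `<` is a min-ordering of `H` with
`a₁ < a₂`, then `b₁ < b₂`. -/
theorem stmt_8 {V : Type*} [LinearOrder V] (A : V → V → Prop)
    (hmin : ∀ u u' v v', A u v → A u' v' → u < u' → v' < v → A u v')
    (a1 a2 b1 b2 : V)
    (h1 : A a1 b1) (h2 : A a2 b2) (h3 : ¬ A a1 b2) (hlt : a1 < a2) :
    b1 < b2 := by
  rcases lt_trichotomy b1 b2 with h | h | h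
  · exact h
  · exact absurd (h ▸ h1) h3
  · exact absurd (hmin a1 a2 b1 b2 h1 h2 hlt h) h3
end

section
/- Let H be a digraph with a min-max-ordering a_1 < ... < a_p and let D be a digraph. For a homomorphism f : D → H, define for each v ∈ V(D) the 0-1 vector with v_i = 1 iff i ≤ t, where f(v) = a_t, and v_{p+1} = 0. Then these vectors satisfy: v_1 = 1, v_{i+1} ≤ v_i, and for every arc uv of D, u_i ≤ v_{ℓ⁺(i)} and v_i ≤ u_{ℓ⁻(i)} for all i, where ℓ⁺(i) (resp. ℓ⁻(i)) is the least index of an out-neighbor (resp. in-neighbor) of a_i. -/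
/-- Let `H` be a digraph on vertex indices `1..p` with a min-max-ordering,
`ℓ⁺(i)` (resp. `ℓ⁻(i)`) the least index of an out-neighbor (resp. in-neighbor) of `i`.
For a homomorphism `f : D → H`, the 0-1 vectors defined by `v_i = 1` iff `i ≤ f(v)`
(with `v_{p+1} = 0`) satisfy: `v_1 = 1`, `v_{i+1} ≤ v_i`, and for every arc `uv` of `D`,
`u_i ≤ v_{ℓ⁺(i)}` and `v_i ≤ u_{ℓ⁻(i)}` for all applicable `i`. -/
theorem stmt_11 {U : Type*} (p : ℕ) (A : ℕ → ℕ → Prop)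
    (hrange : ∀ i j, A i j → 1 ≤ i ∧ i ≤ p ∧ 1 ≤ j ∧ j ≤ p)
    (hmm : ∀ u u' v v', A u v → A u' v' → u < u' → v' < v → A u v' ∧ A u' v)
    (lp lm : ℕ → ℕ)
    (hlp : ∀ i, (∃ j, A i j) → A i (lp i) ∧ ∀ j, A i j → lp i ≤ j)
    (hlm : ∀ i, (∃ j, A j i) → A (lm i) i ∧ ∀ j, A j i → lm i ≤ j)
    (AD : U → U → Prop) (f : U → ℕ)
    (hf : ∀ u v, AD u v → A (f u) (f v)) :
    (∀ u v, AD u v → (1 ≤ f u ∧ f u ≤ p) ∧ (1 ≤ f v ∧ f v ≤ p)) ∧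
    (∀ u : U, ∀ i, i + 1 ≤ f u → i ≤ f u) ∧
    (∀ u v, AD u v → ∀ i, (∃ j, A i j) → i ≤ f u → lp i ≤ f v) ∧
    (∀ u v, AD u v → ∀ i, (∃ j, A j i) → i ≤ f v → lm i ≤ f u) := by
  refine ⟨fun u v h => ⟨⟨(hrange _ _ (hf u v h)).1, (hrange _ _ (hf u v h)).2.1⟩,
    (hrange _ _ (hf u v h)).2.2.1, (hrange _ _ (hf u v h)).2.2.2⟩,
    fun u i h => Nat.le_of_succ_le h, ?_, ?_⟩
  · intro u v h i hij hi
    by_contra hcon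
    push_neg at hcon
    rcases lt_or_eq_of_le hi with hlt | heq
    · exact absurd ((hlp i hij).2 _ (hmm i (f u) (lp i) (f v) (hlp i hij).1 (hf u v h) hlt hcon).1)
        (not_le.mpr hcon)
    · exact absurd ((hlp i hij).2 _ (heq ▸ hf u v h)) (not_le.mpr hcon)
  · intro u v h i hij hi
    by_contra hcon
    push_neg at hcon
    rcases lt_or_eq_of_le hi with hlt | heq
    · exact absurd ((hlm i hij).2 _ (hmm (f u) (lm i) (f v) i (hf u v h) (hlm i hij).1 hcon hlt).1)
        (not_le.mpr hcon)
    · exact absurd ((hlm i hij).2 _ (heq ▸ hf u v h)) (not_le.mpr hcon)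
end

section
/- Let H be a digraph. If H contains a DAT (digraph asteroidal triple) with distinguished vertices a, b, c and directed paths P_1 from (a,b,c), P_2 from (b,a,c), P_3 from (c,a,b) in the pair/triple digraph Ĥ³ all ending at (α,β,β), then H admits no conservative majority polymorphism: for any conservative ternary polymorphism g of H with g(x,x,y)=g(x,y,x)=g(y,x,x)=x for all x,y, the existence of path P_1 forces g(a,b,c) ≠ a, path P_2 forces g(a,b,c) ≠ b, and path P_3 forces g(a,b,c) ≠ c, contradicting conservativity. -/
/-!
Fix a conservative polymorphism `g` with `g α β β = β`. Along an arc `x → y` of `Ĥ³`, if `g`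
picks the first coordinate at `x` then it does so at `y`: `g y` is adjacent to `g x = x₁` in
the direction of the arc, and `x₁` is not adjacent (that way) to `y₂` or `y₃`. Following `P₁`
to its end `(α, β, β)`, where `g` picks `β ≠ α`, shows `g a b c ≠ a`; the same argument applied
to `g` with permuted arguments along `P₂` and `P₃` gives `g a b c ≠ b` and `g a b c ≠ c`,
contradicting conservativity.
-/

section

variable {V : Type*}

def TripleArc (A : V → V → Prop) (x y : V × V × V) : Prop :=
  (A x.1 y.1 ∧ A x.2.1 y.2.1 ∧ A x.2.2 y.2.2 ∧ ¬ A x.1 y.2.1 ∧ ¬ A x.1 y.2.2) ∨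
  (A y.1 x.1 ∧ A y.2.1 x.2.1 ∧ A y.2.2 x.2.2 ∧ ¬ A y.2.1 x.1 ∧ ¬ A y.2.2 x.1)

def IsPolymorphism (A : V → V → Prop) (g : V → V → V → V) : Prop :=
  ∀ x1 x2 x3 y1 y2 y3, A x1 y1 → A x2 y2 → A x3 y3 → A (g x1 x2 x3) (g y1 y2 y3)

def IsConservative (g : V → V → V → V) : Prop :=
  ∀ x y z, g x y z = x ∨ g x y z = y ∨ g x y z = z

variable {A : V → V → Prop} {g : V → V → V → V}

theorem IsPolymorphism.flip (hg : IsPolymorphism A g) : IsPolymorphism (flip A) g :=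
  fun x1 x2 x3 y1 y2 y3 h1 h2 h3 => hg y1 y2 y3 x1 x2 x3 h1 h2 h3

theorem IsPolymorphism.swap12 (hg : IsPolymorphism A g) :
    IsPolymorphism A fun p q r => g q p r :=
  fun x1 x2 x3 y1 y2 y3 h1 h2 h3 => hg x2 x1 x3 y2 y1 y3 h2 h1 h3

theorem IsPolymorphism.rotate (hg : IsPolymorphism A g) :
    IsPolymorphism A fun p q r => g q r p :=
  fun x1 x2 x3 y1 y2 y3 h1 h2 h3 => hg x2 x3 x1 y2 y3 y1 h2 h3 h1

theorem IsConservative.swap12 (hc : IsConservative g) : IsConservative fun p q r => g q p r := by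
  intro x y z
  rcases hc y x z with h | h | h <;> simp only [h, true_or, or_true]

theorem IsConservative.rotate (hc : IsConservative g) : IsConservative fun p q r => g q r p := by
  intro x y z
  rcases hc y z x with h | h | h <;> simp only [h, true_or, or_true]

theorem IsPolymorphism.eq_fst_of_forward_arc (hg : IsPolymorphism A g) (hc : IsConservative g)
    {x1 x2 x3 y1 y2 y3 : V} (h1 : A x1 y1) (h2 : A x2 y2) (h3 : A x3 y3)
    (h12 : ¬ A x1 y2) (h13 : ¬ A x1 y3) (hx : g x1 x2 x3 = x1) : g y1 y2 y3 = y1 := by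
  have hxy := hg x1 x2 x3 y1 y2 y3 h1 h2 h3
  rw [hx] at hxy
  rcases hc y1 y2 y3 with h | h | h
  · exact h
  · exact absurd (h ▸ hxy) h12
  · exact absurd (h ▸ hxy) h13

theorem IsPolymorphism.eq_fst_of_tripleArc (hg : IsPolymorphism A g) (hc : IsConservative g)
    {x y : V × V × V} (hxy : TripleArc A x y) (hx : g x.1 x.2.1 x.2.2 = x.1) :
    g y.1 y.2.1 y.2.2 = y.1 := by
  rcases hxy with ⟨h1, h2, h3, h12, h13⟩ | ⟨h1, h2, h3, h12, h13⟩
  · exact hg.eq_fst_of_forward_arc hc h1 h2 h3 h12 h13 hx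
  · exact hg.flip.eq_fst_of_forward_arc hc h1 h2 h3 h12 h13 hx

theorem IsPolymorphism.eq_fst_of_reflTransGen (hg : IsPolymorphism A g) (hc : IsConservative g)
    {x y : V × V × V} (hxy : Relation.ReflTransGen (TripleArc A) x y)
    (hx : g x.1 x.2.1 x.2.2 = x.1) : g y.1 y.2.1 y.2.2 = y.1 := by
  induction hxy with
  | refl => exact hx
  | tail _ harc ih => exact hg.eq_fst_of_tripleArc hc harc ih

theorem IsPolymorphism.ne_fst_of_reflTransGen (hg : IsPolymorphism A g) (hc : IsConservative g)
    {x1 x2 x3 α β : V} (hαβ : α ≠ β)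
    (hpath : Relation.ReflTransGen (TripleArc A) (x1, x2, x3) (α, β, β)) (hend : g α β β = β) :
    g x1 x2 x3 ≠ x1 := fun hx =>
  hαβ ((hg.eq_fst_of_reflTransGen hc hpath hx).symm.trans hend)

end

theorem stmt_19_general {V : Type*} (A : V → V → Prop)
    (Arc3 : V × V × V → V × V × V → Prop)
    (hArc3 : ∀ x y, Arc3 x y ↔
      ((A x.1 y.1 ∧ A x.2.1 y.2.1 ∧ A x.2.2 y.2.2 ∧ ¬ A x.1 y.2.1 ∧ ¬ A x.1 y.2.2) ∨
       (A y.1 x.1 ∧ A y.2.1 x.2.1 ∧ A y.2.2 x.2.2 ∧ ¬ A y.2.1 x.1 ∧ ¬ A y.2.2 x.1)))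
    (a b c α β : V) (hαβ : α ≠ β)
    (hP1 : Relation.ReflTransGen Arc3 (a, b, c) (α, β, β))
    (hP2 : Relation.ReflTransGen Arc3 (b, a, c) (α, β, β))
    (hP3 : Relation.ReflTransGen Arc3 (c, a, b) (α, β, β)) :
    ¬ ∃ g : V → V → V → V,
        (∀ x1 x2 x3 y1 y2 y3, A x1 y1 → A x2 y2 → A x3 y3 →
          A (g x1 x2 x3) (g y1 y2 y3)) ∧
        (∀ x y z, g x y z = x ∨ g x y z = y ∨ g x y z = z) ∧
        (∀ x y, g x x y = x ∧ g x y x = x ∧ g y x x = x) := by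
  rintro ⟨g, hpoly, hcons, hmaj⟩
  have hg : IsPolymorphism A g := hpoly
  have hc : IsConservative g := hcons
  obtain rfl : Arc3 = TripleArc A := funext₂ fun x y => propext (hArc3 x y)
  rcases hcons a b c with h | h | h
  · exact hg.ne_fst_of_reflTransGen hc hαβ hP1 (hmaj β α).2.2 h
  · exact hg.swap12.ne_fst_of_reflTransGen hc.swap12 hαβ hP2 (hmaj β α).2.1 h
  · exact hg.rotate.ne_fst_of_reflTransGen hc.rotate hαβ hP3 (hmaj β α).1 h

/-- If a digraph `H` contains a DAT — directed paths `P₁` from `(a,b,c)`,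
`P₂` from `(b,a,c)`, `P₃` from `(c,a,b)` in the triple digraph `Ĥ³` all ending at
`(α,β,β)`, where `(α,β)` is an invertible pair (in particular `α ≠ β`) — then `H` admits
no conservative majority polymorphism. -/
theorem stmt_19 {V : Type*} (A : V → V → Prop)
    (Arc2 : V × V → V × V → Prop)
    (hArc2 : ∀ x y, Arc2 x y ↔
      ((A x.1 y.1 ∧ A x.2 y.2 ∧ ¬ A x.1 y.2) ∨
       (A y.1 x.1 ∧ A y.2 x.2 ∧ ¬ A y.2 x.1)))
    (Arc3 : V × V × V → V × V × V → Prop)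
    (hArc3 : ∀ x y, Arc3 x y ↔
      ((A x.1 y.1 ∧ A x.2.1 y.2.1 ∧ A x.2.2 y.2.2 ∧ ¬ A x.1 y.2.1 ∧ ¬ A x.1 y.2.2) ∨
       (A y.1 x.1 ∧ A y.2.1 x.2.1 ∧ A y.2.2 x.2.2 ∧ ¬ A y.2.1 x.1 ∧ ¬ A y.2.2 x.1)))
    (a b c α β : V) (hαβ : α ≠ β)
    (hinv1 : Relation.ReflTransGen Arc2 (α, β) (β, α))
    (hinv2 : Relation.ReflTransGen Arc2 (β, α) (α, β))
    (hP1 : Relation.ReflTransGen Arc3 (a, b, c) (α, β, β))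
    (hP2 : Relation.ReflTransGen Arc3 (b, a, c) (α, β, β))
    (hP3 : Relation.ReflTransGen Arc3 (c, a, b) (α, β, β)) :
    ¬ ∃ g : V → V → V → V,
        (∀ x1 x2 x3 y1 y2 y3, A x1 y1 → A x2 y2 → A x3 y3 →
          A (g x1 x2 x3) (g y1 y2 y3)) ∧
        (∀ x y z, g x y z = x ∨ g x y z = y ∨ g x y z = z) ∧
        (∀ x y, g x x y = x ∧ g x y x = x ∧ g y x x = x) :=
  stmt_19_general A Arc3 hArc3 a b c α β hαβ hP1 hP2 hP3
end
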